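/- arXiv:1606.03461 — 2 statements merged into one kernel-verified Lean document; each statement's English description precedes it below -/
import Mathlib

section
/- Let Q be a dyadic cube, w a weight, 1 < p < ∞, and suppose B^λ = ⊔_i Q_i^λ is a disjoint union of subcubes of Q each satisfying ⟨w⟩_{Q_i^λ} ≥ λ⟨w⟩_Q, and that ∫_{B^λ} w dμ ≥ (1/3)∫_Q w dμ and ⟨w⟩_{B^λ} ≤ Dλ⟨w⟩_Q. Then ∫_Q w^p dμ ≥ (1/(3D))·λ^{p-1}·μ(Q)·⟨w⟩_Q^p, and consequently ⟨w^p⟩_Q^{1/p} ≥ ((1/(3D))λ^{p-1})^{1/p}⟨w⟩_Q. -/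
open MeasureTheory

/-- The average `⟨f⟩_S = (1/μ(S)) ∫_S f dμ`. -/
noncomputable def avg {X : Type*} [MeasurableSpace X] (μ : Measure X)
    (f : X → ℝ) (S : Set X) : ℝ :=
  (μ S).toReal⁻¹ * ∫ x in S, f x ∂μ

/-!
On each cube `Qᵢ`, Jensen's inequality and `⟨w⟩_{Qᵢ} ≥ λA` (with `A = ⟨w⟩_Q`) give
`∫_{Qᵢ} w^p ≥ μ(Qᵢ)(λA)^p`; summing over the disjoint cubes, `∫_Q w^p ≥ μ(B)(λA)^p`.
The bad part `B` carries a third of the mass of `Q` at average density at most `DλA`, so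
`μ(B) ≥ μ(Q)/(3Dλ)`, which yields the bound on `∫_Q w^p`; dividing by `μ(Q)` and taking
`p`-th roots gives the bound on averages.
-/

open scoped ENNReal

section Averages

variable {X : Type*} [MeasurableSpace X] {μ : Measure X} {S : Set X}

lemma avg_eq_setAverage (f : X → ℝ) : avg μ f S = ⨍ x in S, f x ∂μ := by
  rw [setAverage_eq, smul_eq_mul]
  rfl

lemma setIntegral_eq_toReal_mul_avg (f : X → ℝ) (hS : μ S ≠ ∞) :
    ∫ x in S, f x ∂μ = (μ S).toReal * avg μ f S := by
  rw [avg_eq_setAverage, ← measure_smul_setAverage f hS, smul_eq_mul, measureReal_def]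

lemma avg_nonneg {f : X → ℝ} (hf : ∀ x, 0 ≤ f x) : 0 ≤ avg μ f S :=
  mul_nonneg (inv_nonneg.2 ENNReal.toReal_nonneg) (integral_nonneg hf)

lemma toReal_measure_pos_of_avg_ne_zero {f : X → ℝ} (h : avg μ f S ≠ 0) : 0 < (μ S).toReal := by
  refine ENNReal.toReal_nonneg.lt_of_ne fun h0 => h ?_
  rw [avg, ← h0, inv_zero, zero_mul]

lemma le_avg_of_toReal_mul_le_setIntegral {f : X → ℝ} {c : ℝ} (hS : 0 < (μ S).toReal)
    (h : (μ S).toReal * c ≤ ∫ x in S, f x ∂μ) : c ≤ avg μ f S := by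
  rw [avg, ← div_eq_inv_mul, le_div_iff₀ hS, mul_comm]
  exact h

lemma avg_rpow_le_avg_rpow {w : X → ℝ} {p : ℝ} (hw : ∀ x, 0 ≤ w x) (hp : 1 ≤ p)
    (hS : μ S ≠ ∞) (hint : IntegrableOn w S μ) (hintp : IntegrableOn (fun x => w x ^ p) S μ) :
    avg μ w S ^ p ≤ avg μ (fun x => w x ^ p) S := by
  rcases eq_or_ne (μ S) 0 with h0 | h0
  · simp [avg, h0, Real.zero_rpow (by linarith : p ≠ 0)]
  rw [avg_eq_setAverage, avg_eq_setAverage]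
  exact (convexOn_rpow hp).map_set_average_le
    (fun x _ => (Real.continuousAt_rpow_const x p (Or.inr (by linarith))).continuousWithinAt)
    isClosed_Ici h0 hS (Filter.Eventually.of_forall fun x => hw x) hint hintp

lemma mul_toReal_le_mul_toReal_of_mul_setIntegral_le {T : Set X} {f : X → ℝ} {c K : ℝ}
    (hS : μ S ≠ ∞) (hT : μ T ≠ ∞) (hpos : 0 < avg μ f S)
    (hmass : c * ∫ x in S, f x ∂μ ≤ ∫ x in T, f x ∂μ) (havg : avg μ f T ≤ K * avg μ f S) :
    c * (μ S).toReal ≤ K * (μ T).toReal := by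
  rw [setIntegral_eq_toReal_mul_avg f hS, setIntegral_eq_toReal_mul_avg f hT] at hmass
  refine le_of_mul_le_mul_right ?_ hpos
  calc c * (μ S).toReal * avg μ f S = c * ((μ S).toReal * avg μ f S) := by ring
    _ ≤ (μ T).toReal * avg μ f T := hmass
    _ ≤ (μ T).toReal * (K * avg μ f S) := by gcongr
    _ = K * (μ T).toReal * avg μ f S := by ring

lemma toReal_mul_rpow_le_setIntegral_rpow {w : X → ℝ} {p c : ℝ} (hw : ∀ x, 0 ≤ w x)
    (hp : 1 ≤ p) (hS : μ S ≠ ∞) (hint : IntegrableOn w S μ)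
    (hintp : IntegrableOn (fun x => w x ^ p) S μ) (hc : 0 ≤ c) (hcS : c ≤ avg μ w S) :
    (μ S).toReal * c ^ p ≤ ∫ x in S, w x ^ p ∂μ := by
  rw [setIntegral_eq_toReal_mul_avg _ hS]
  gcongr
  exact (Real.rpow_le_rpow hc hcS (by linarith)).trans
    (avg_rpow_le_avg_rpow hw hp hS hint hintp)

lemma toReal_mul_le_setIntegral_iUnion {ι : Type*} [Countable ι] {s : ι → Set X} {f : X → ℝ}
    {c : ℝ} (hs : ∀ i, MeasurableSet (s i)) (hd : Pairwise (Function.onFun Disjoint s))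
    (hf : IntegrableOn f (⋃ i, s i) μ) (hfin : μ (⋃ i, s i) ≠ ∞)
    (h : ∀ i, (μ (s i)).toReal * c ≤ ∫ x in s i, f x ∂μ) :
    (μ (⋃ i, s i)).toReal * c ≤ ∫ x in ⋃ i, s i, f x ∂μ := by
  rw [measure_iUnion hd hs] at hfin ⊢
  have hμ : HasSum (fun i => (μ (s i)).toReal) (∑' i, μ (s i)).toReal := by
    rw [ENNReal.tsum_toReal_eq fun i => ne_top_of_le_ne_top hfin (ENNReal.le_tsum i)]
    exact (ENNReal.summable_toReal hfin).hasSum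
  exact hasSum_le h (hμ.mul_right c) (hasSum_integral_iUnion hs hd hf)

end Averages

lemma Real.rpow_one_div_mul_le_of_mul_rpow_le {a b c p : ℝ} (ha : 0 ≤ a) (hc : 0 ≤ c) (hp : 0 < p)
    (h : c * a ^ p ≤ b) : c ^ (1 / p) * a ≤ b ^ (1 / p) := by
  calc c ^ (1 / p) * a = (c * a ^ p) ^ (1 / p) := by
        rw [Real.mul_rpow hc (Real.rpow_nonneg ha p), one_div, Real.rpow_rpow_inv ha hp.ne']
    _ ≤ b ^ (1 / p) := Real.rpow_le_rpow (by positivity) h (by positivity)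

theorem bad_part_lower_bound_general
    {X : Type*} [MeasurableSpace X] (μ : Measure X) (w : X → ℝ)
    (hw : ∀ x, 0 ≤ w x)
    (p D l : ℝ) (hp : 1 < p) (hD : 1 ≤ D) (hl : 1 < l)
    (Q : Set X) (Qi : ℕ → Set X)
    (hmQi : ∀ i, MeasurableSet (Qi i))
    (hsub : ∀ i, Qi i ⊆ Q) (hdisj : Pairwise (Function.onFun Disjoint Qi))
    (hintp : IntegrableOn (fun x => w x ^ p) Q μ)
    (hint : IntegrableOn w Q μ)
    (havgQi : ∀ i, avg μ w (Qi i) ≥ l * avg μ w Q)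
    (hmass : (1 / 3) * ∫ x in Q, w x ∂μ ≤ ∫ x in ⋃ i, Qi i, w x ∂μ)
    (havgB : avg μ w (⋃ i, Qi i) ≤ D * l * avg μ w Q) :
    (1 / (3 * D)) * l ^ (p - 1) * (μ Q).toReal * (avg μ w Q) ^ p ≤
        ∫ x in Q, w x ^ p ∂μ ∧
      ((1 / (3 * D)) * l ^ (p - 1)) ^ (1 / p) * avg μ w Q ≤
        (avg μ (fun x => w x ^ p) Q) ^ (1 / p) := by
  set B := ⋃ i, Qi i
  set A := avg μ w Q
  have hBQ : B ⊆ Q := Set.iUnion_subset hsub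
  have hA0 : 0 ≤ A := avg_nonneg hw
  rcases hA0.eq_or_lt with hA | hA
  · rw [← hA, Real.zero_rpow (by linarith), mul_zero, mul_zero]
    exact ⟨integral_nonneg fun x => Real.rpow_nonneg (hw x) p,
      Real.rpow_nonneg (avg_nonneg fun x => Real.rpow_nonneg (hw x) p) _⟩
  have hμQ : 0 < (μ Q).toReal := toReal_measure_pos_of_avg_ne_zero hA.ne'
  have hQfin : μ Q ≠ ∞ := (ENNReal.toReal_pos_iff.1 hμQ).2.ne
  have hBfin : μ B ≠ ∞ := measure_ne_top_of_subset hBQ hQfin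
  have hμB : 1 / 3 * (μ Q).toReal ≤ D * l * (μ B).toReal :=
    mul_toReal_le_mul_toReal_of_mul_setIntegral_le hQfin hBfin hA hmass havgB
  have hpB : (μ B).toReal * (l * A) ^ p ≤ ∫ x in B, w x ^ p ∂μ :=
    toReal_mul_le_setIntegral_iUnion hmQi hdisj (hintp.mono_set hBQ) hBfin fun i =>
      toReal_mul_rpow_le_setIntegral_rpow hw hp.le (measure_ne_top_of_subset (hsub i) hQfin)
        (hint.mono_set (hsub i)) (hintp.mono_set (hsub i)) (by positivity) (havgQi i)
  have key : (1 / (3 * D)) * l ^ (p - 1) * (μ Q).toReal * A ^ p ≤ ∫ x in Q, w x ^ p ∂μ := by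
    calc (1 / (3 * D)) * l ^ (p - 1) * (μ Q).toReal * A ^ p
        = (μ Q).toReal * ((l * A) ^ p / (3 * D * l)) := by
          rw [Real.mul_rpow (by linarith) hA.le, Real.rpow_sub_one (by linarith)]
          field_simp
      _ ≤ 3 * (D * l * (μ B).toReal) * ((l * A) ^ p / (3 * D * l)) := by gcongr; linarith
      _ = (μ B).toReal * (l * A) ^ p := by field_simp
      _ ≤ ∫ x in B, w x ^ p ∂μ := hpB
      _ ≤ ∫ x in Q, w x ^ p ∂μ := setIntegral_mono_set hintp
          (Filter.Eventually.of_forall fun x => Real.rpow_nonneg (hw x) p) hBQ.eventuallyLE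
  refine ⟨key, Real.rpow_one_div_mul_le_of_mul_rpow_le hA.le (by positivity) (by linarith) ?_⟩
  refine le_avg_of_toReal_mul_le_setIntegral hμQ ?_
  linarith

/-- Lower bound for `∫_Q w^p` from the big-average bad part `B^λ = ⊔ᵢ Qᵢ^λ`:
if `⟨w⟩_{Qᵢ^λ} ≥ λ⟨w⟩_Q` for each `i`, `∫_{B^λ} w ≥ (1/3)∫_Q w` and
`⟨w⟩_{B^λ} ≤ Dλ⟨w⟩_Q`, then `∫_Q w^p ≥ (1/(3D))λ^{p-1}μ(Q)⟨w⟩_Q^p`, hence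
`⟨w^p⟩_Q^{1/p} ≥ ((1/(3D))λ^{p-1})^{1/p}⟨w⟩_Q`. -/
theorem bad_part_lower_bound
    {X : Type*} [MeasurableSpace X] (μ : Measure X) (w : X → ℝ)
    (hw : ∀ x, 0 ≤ w x) (hwm : Measurable w)
    (p D l : ℝ) (hp : 1 < p) (hD : 1 ≤ D) (hl : 1 < l)
    (Q : Set X) (Qi : ℕ → Set X)
    (hmQ : MeasurableSet Q) (hmQi : ∀ i, MeasurableSet (Qi i))
    (hsub : ∀ i, Qi i ⊆ Q) (hdisj : Pairwise (Function.onFun Disjoint Qi))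
    (hposQ : 0 < μ Q) (hfinQ : μ Q < ⊤) (hposQi : ∀ i, 0 < μ (Qi i))
    (hintp : IntegrableOn (fun x => w x ^ p) Q μ)
    (hint : IntegrableOn w Q μ)
    (havgQi : ∀ i, avg μ w (Qi i) ≥ l * avg μ w Q)
    (hmass : (1 / 3) * ∫ x in Q, w x ∂μ ≤ ∫ x in ⋃ i, Qi i, w x ∂μ)
    (havgB : avg μ w (⋃ i, Qi i) ≤ D * l * avg μ w Q) :
    (1 / (3 * D)) * l ^ (p - 1) * (μ Q).toReal * (avg μ w Q) ^ p ≤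
        ∫ x in Q, w x ^ p ∂μ ∧
      ((1 / (3 * D)) * l ^ (p - 1)) ^ (1 / p) * avg μ w Q ≤
        (avg μ (fun x => w x ^ p) Q) ^ (1 / p) :=
  bad_part_lower_bound_general μ w hw p D l hp hD hl Q Qi hmQi hsub hdisj hintp hint havgQi hmass
    havgB
end

section
/- Let Q be a measurable set partitioned (up to null sets) as Q = ⊔_{n≥1} G_n, let w ≥ 0, and suppose there are constants K > 1, 0 < a < 1, M ≥ 0 such that w ≤ K^n·⟨w⟩_Q a.e. on G_n and ∫_{G_n} w^p dμ ≤ a^{n-1}∫_Q w^p dμ. Then for any ε > 0 with K^ε·a < 1, one has ⟨w^{p+ε}⟩_Q ≤ A·⟨w⟩_Q^ε·⟨w^p⟩_Q, where A = Σ_{n≥1} K^{nε} a^{n-1} < ∞. -/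
open MeasureTheory

/-- Summing the layers: if `Q = ⊔_{n≥1} G_n` up to null sets, `w ≤ Kⁿ⟨w⟩_Q`
a.e. on `G_n` and `∫_{G_n} w^p ≤ a^{n-1} ∫_Q w^p`, then for `ε > 0` with
`K^ε a < 1` one has `⟨w^{p+ε}⟩_Q ≤ A ⟨w⟩_Q^ε ⟨w^p⟩_Q` with
`A = Σ_{n≥1} K^{nε} a^{n-1}`. -/
theorem layered_higher_integrability
    {X : Type*} [MeasurableSpace X] (μ : Measure X) (w : X → ℝ)
    (hw : ∀ x, 0 ≤ w x) (hwm : Measurable w)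
    (p a K ε : ℝ) (hp : 1 < p) (ha : 0 < a) (ha1 : a < 1) (hK : 1 < K)
    (hε : 0 < ε) (hKεa : K ^ ε * a < 1)
    (Q : Set X) (hmQ : MeasurableSet Q) (hposQ : 0 < μ Q) (hfinQ : μ Q < ⊤)
    (G : ℕ → Set X) (hmG : ∀ n, MeasurableSet (G n))
    (hsub : ∀ n : ℕ, 1 ≤ n → G n ⊆ Q)
    (hdisj : Pairwise (Function.onFun Disjoint G))
    (hnull : μ (Q \ ⋃ n : ℕ, G (n + 1)) = 0)
    (hintp : IntegrableOn (fun x => w x ^ p) Q μ)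
    (hintpε : IntegrableOn (fun x => w x ^ (p + ε)) Q μ)
    (hbound : ∀ n : ℕ, 1 ≤ n → ∀ᵐ x ∂(μ.restrict (G n)),
      w x ≤ K ^ (n : ℝ) * avg μ w Q)
    (hdecay : ∀ n : ℕ, 1 ≤ n →
      ∫ x in G n, w x ^ p ∂μ ≤ a ^ (n - 1) * ∫ x in Q, w x ^ p ∂μ) :
    avg μ (fun x => w x ^ (p + ε)) Q ≤
      (∑' n : ℕ, K ^ ((n + 1 : ℝ) * ε) * a ^ n) * (avg μ w Q) ^ ε *
        avg μ (fun x => w x ^ p) Q := by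
  have hK0 : (0:ℝ) < K := lt_trans one_pos hK
  set U : Set X := ⋃ n : ℕ, G (n + 1) with hUdef
  have hGm : ∀ n : ℕ, MeasurableSet (G (n+1)) := fun n => hmG _
  have hGd : Pairwise (Function.onFun Disjoint (fun n : ℕ => G (n+1))) :=
    fun m n hmn => hdisj (by omega)
  have hUQ : U ⊆ Q := Set.iUnion_subset fun n => hsub (n+1) (by omega)
  have hQU : Q =ᵐ[μ] U := by
    rw [MeasureTheory.ae_eq_set]
    refine ⟨hnull, ?_⟩
    rw [Set.diff_eq_empty.mpr hUQ]; simp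
  have havg : 0 ≤ avg μ w Q :=
    mul_nonneg (by positivity) (setIntegral_nonneg hmQ fun x _ => hw x)
  have hJ : 0 ≤ ∫ x in Q, w x ^ p ∂μ :=
    setIntegral_nonneg hmQ fun x _ => Real.rpow_nonneg (hw x) p
  -- the per-layer bound
  have key : ∀ n : ℕ, ∫ x in G (n+1), w x ^ (p+ε) ∂μ ≤
      (K ^ ((n+1:ℝ)*ε) * a ^ n) * ((avg μ w Q) ^ ε * ∫ x in Q, w x ^ p ∂μ) := by
    intro n
    set C : ℝ := K ^ ((n+1:ℝ)*ε) * (avg μ w Q) ^ ε with hCdef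
    have hC0 : 0 ≤ C :=
      mul_nonneg (Real.rpow_nonneg hK0.le _) (Real.rpow_nonneg havg _)
    have h3 : (K ^ (((n+1:ℕ)) : ℝ) * avg μ w Q) ^ ε = C := by
      rw [hCdef, Real.mul_rpow (Real.rpow_nonneg hK0.le _) havg,
        ← Real.rpow_mul hK0.le]
      push_cast; ring_nf
    have hae : ∀ᵐ x ∂(μ.restrict (G (n+1))), w x ^ (p+ε) ≤ C * w x ^ p := by
      filter_upwards [hbound (n+1) (by omega)] with x hx
      have hx0 := hw x
      have h1 : w x ^ (p+ε) = w x ^ p * w x ^ ε :=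
        Real.rpow_add_of_nonneg hx0 (by linarith) hε.le
      have h2 : w x ^ ε ≤ (K ^ (((n+1:ℕ)) : ℝ) * avg μ w Q) ^ ε :=
        Real.rpow_le_rpow hx0 hx hε.le
      calc w x ^ (p+ε) = w x ^ p * w x ^ ε := h1
        _ ≤ w x ^ p * (K ^ (((n+1:ℕ)) : ℝ) * avg μ w Q) ^ ε :=
            mul_le_mul_of_nonneg_left h2 (Real.rpow_nonneg hx0 p)
        _ = C * w x ^ p := by rw [h3]; ring
    have hint1 : IntegrableOn (fun x => w x ^ (p+ε)) (G (n+1)) μ :=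
      hintpε.mono_set (hsub (n+1) (by omega))
    have hint2 : IntegrableOn (fun x => C * w x ^ p) (G (n+1)) μ :=
      (hintp.mono_set (hsub (n+1) (by omega))).const_mul C
    have hmono := integral_mono_ae hint1 hint2 hae
    rw [MeasureTheory.integral_const_mul] at hmono
    have hdec := hdecay (n+1) (by omega)
    simp only [Nat.add_sub_cancel] at hdec
    calc ∫ x in G (n+1), w x ^ (p+ε) ∂μ
        ≤ C * ∫ x in G (n+1), w x ^ p ∂μ := hmono
      _ ≤ C * (a ^ n * ∫ x in Q, w x ^ p ∂μ) :=
          mul_le_mul_of_nonneg_left hdec hC0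
      _ = (K ^ ((n+1:ℝ)*ε) * a ^ n) * ((avg μ w Q) ^ ε * ∫ x in Q, w x ^ p ∂μ) := by
          rw [hCdef]; ring
  -- sum over the layers
  have hIU : IntegrableOn (fun x => w x ^ (p+ε)) U μ := hintpε.mono_set hUQ
  have hsum1 : HasSum (fun n : ℕ => ∫ x in G (n+1), w x ^ (p+ε) ∂μ)
      (∫ x in U, w x ^ (p+ε) ∂μ) :=
    hasSum_integral_iUnion hGm hGd hIU
  have hQeq : ∫ x in Q, w x ^ (p+ε) ∂μ = ∫ x in U, w x ^ (p+ε) ∂μ :=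
    setIntegral_congr_set hQU
  have hKn : ∀ n : ℕ, K ^ ((n+1:ℝ)*ε) * a ^ n = K ^ ε * (K ^ ε * a) ^ n := by
    intro n
    have h : (K ^ ε * a) ^ n = K ^ (ε * (n:ℝ)) * a ^ n := by
      rw [mul_pow, ← Real.rpow_natCast (K ^ ε) n, ← Real.rpow_mul hK0.le]
    rw [h, show ((n:ℝ)+1)*ε = ε + ε*(n:ℝ) by ring, Real.rpow_add hK0, mul_assoc]
  have hr0 : (0:ℝ) ≤ K ^ ε * a := mul_nonneg (Real.rpow_nonneg hK0.le _) ha.le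
  have hsumg : Summable (fun n : ℕ => K ^ ((n+1:ℝ)*ε) * a ^ n) := by
    have : Summable (fun n : ℕ => K ^ ε * (K ^ ε * a) ^ n) :=
      (summable_geometric_of_lt_one hr0 hKεa).mul_left _
    exact this.congr fun n => (hKn n).symm
  have hsumb : Summable (fun n : ℕ =>
      (K ^ ((n+1:ℝ)*ε) * a ^ n) * ((avg μ w Q) ^ ε * ∫ x in Q, w x ^ p ∂μ)) :=
    hsumg.mul_right _
  have main : ∫ x in Q, w x ^ (p+ε) ∂μ ≤
      (∑' n : ℕ, K ^ ((n+1:ℝ)*ε) * a ^ n) *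
        ((avg μ w Q) ^ ε * ∫ x in Q, w x ^ p ∂μ) := by
    rw [hQeq, ← hsum1.tsum_eq]
    calc (∑' n : ℕ, ∫ x in G (n+1), w x ^ (p+ε) ∂μ)
        ≤ ∑' n : ℕ, (K ^ ((n+1:ℝ)*ε) * a ^ n) *
            ((avg μ w Q) ^ ε * ∫ x in Q, w x ^ p ∂μ) :=
          Summable.tsum_le_tsum key hsum1.summable hsumb
      _ = (∑' n : ℕ, K ^ ((n+1:ℝ)*ε) * a ^ n) *
            ((avg μ w Q) ^ ε * ∫ x in Q, w x ^ p ∂μ) := tsum_mul_right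
  have hc : (0:ℝ) ≤ (μ Q).toReal⁻¹ := by positivity
  show (μ Q).toReal⁻¹ * ∫ x in Q, w x ^ (p+ε) ∂μ ≤ _
  calc (μ Q).toReal⁻¹ * ∫ x in Q, w x ^ (p+ε) ∂μ
      ≤ (μ Q).toReal⁻¹ * ((∑' n : ℕ, K ^ ((n+1:ℝ)*ε) * a ^ n) *
          ((avg μ w Q) ^ ε * ∫ x in Q, w x ^ p ∂μ)) :=
        mul_le_mul_of_nonneg_left main hc
    _ = (∑' n : ℕ, K ^ ((n+1:ℝ)*ε) * a ^ n) * (avg μ w Q) ^ ε *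
          ((μ Q).toReal⁻¹ * ∫ x in Q, w x ^ p ∂μ) := by ring
    _ = (∑' n : ℕ, K ^ ((n+1:ℝ)*ε) * a ^ n) * (avg μ w Q) ^ ε *
          avg μ (fun x => w x ^ p) Q := rfl
end
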